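/- Let α ∈ (0,1), λ > 0, and let w : ℝ^N → ℝ be a C^2 function with finite global α-Hölder seminorm satisfying Δw = λw on ℝ^N. Then w ≡ 0. -/

import Mathlib

open MeasureTheory Metric Filter
open scoped ENNReal NNReal RealInnerProductSpace Topology

noncomputable section

abbrev Euc (N : ℕ) := EuclideanSpace ℝ (Fin N)

/-- Laplacian of `f` at `x`. -/
noncomputable def lap {N : ℕ} (f : Euc N → ℝ) (x : Euc N) : ℝ :=
  ∑ i : Fin N, fderiv ℝ (fun y => fderiv ℝ f y (EuclideanSpace.single i 1)) x
    (EuclideanSpace.single i 1)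

noncomputable def gam (N : ℕ) (t : ℝ) : ℝ :=
  Real.sqrt ((((N : ℝ) - 2) / 2) ^ 2 + t) - ((N : ℝ) - 2) / 2

/-- surface measure on the unit sphere of `ℝ^N`. -/
noncomputable def sphMeas (N : ℕ) : Measure (Euc N) :=
  (μH[((N : ℝ) - 1)]).restrict (Metric.sphere (0 : Euc N) 1)

noncomputable def lamMin (N : ℕ) (u : Euc N → ℝ) : ℝ :=
  sInf { c : ℝ | ∃ φ : Euc N → ℝ, ContDiff ℝ 1 φ ∧
    sphMeas N ({x | φ x ≠ 0} ∩ {x | u x = 0}) = 0 ∧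
    0 < ∫ x, (φ x) ^ 2 ∂(sphMeas N) ∧
    c = (∫ x, ‖gradient φ x‖ ^ 2 ∂(sphMeas N)) / (∫ x, (φ x) ^ 2 ∂(sphMeas N)) }

noncomputable def alphaKN (N k : ℕ) : ℝ :=
  sInf { s : ℝ | ∃ u : Fin k → Euc N → ℝ,
    (∀ j, MemLp (u j) 2 (sphMeas N)) ∧
    (∀ j, MemLp (fun x => ‖gradient (u j) x‖) 2 (sphMeas N)) ∧
    (∀ j, ¬ (u j =ᵐ[sphMeas N] 0)) ∧
    (∫ x, ∏ j, (u j x) ^ 2 ∂(sphMeas N)) = 0 ∧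
    s = ∑ j, gam N (lamMin N (u j)) }

end

/-!
The proof is a maximum principle. Since `α ≤ 1`, the Hölder bound makes `w` grow at most
linearly, so for `ε > 0` the function `w - ε ‖· - x₀‖ ^ 2` attains a global maximum at some
point `p`. There its Laplacian is nonpositive, which reads `λ w p ≤ Δw p ≤ 2 N ε`, while
`w x₀ ≤ w p`. Letting `ε → 0` gives `w x₀ ≤ 0`, and the same argument applied to `-w` gives
`w x₀ ≥ 0`.
-/

theorem IsLocalMax.deriv_deriv_nonpos {g : ℝ → ℝ} {a : ℝ} (h : IsLocalMax g a)
    (hc : ContinuousAt g a) : deriv (deriv g) a ≤ 0 := by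
  by_contra! hpos
  have hmin : IsLocalMin g a := isLocalMin_of_deriv_deriv_pos hpos h.deriv_eq_zero hc
  have hconst : g =ᶠ[𝓝 a] fun _ => g a :=
    (h.and hmin).mono fun x hx => le_antisymm hx.1 hx.2
  have hderiv : deriv g =ᶠ[𝓝 a] fun _ => 0 :=
    hconst.eventuallyEq_nhds.mono fun x hx => by rw [hx.deriv_eq, deriv_const]
  rw [hderiv.deriv_eq, deriv_const] at hpos
  exact hpos.false

section SecondDerivative

variable {E : Type*} [NormedAddCommGroup E] [NormedSpace ℝ E] {f : E → ℝ}

theorem ContDiff.differentiable_fderiv_apply (hf : ContDiff ℝ 2 f) (v : E) :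
    Differentiable ℝ (fun y => fderiv ℝ f y v) :=
  ((hf.fderiv_right (m := 1) (by norm_num)).clm_apply contDiff_const).differentiable
    (by norm_num)

theorem IsLocalMax.fderiv_fderiv_apply_nonpos {p : E} (h : IsLocalMax f p)
    (hf : ContDiff ℝ 2 f) (v : E) : fderiv ℝ (fun y => fderiv ℝ f y v) p v ≤ 0 := by
  set L : ℝ → E := fun t => p + t • v
  have hL0 : L 0 = p := by simp [L]
  have hL : ∀ t, HasDerivAt L v t := fun t =>
    (((hasDerivAt_id t).smul_const v).const_add p).congr_deriv (one_smul ℝ v)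
  have hderiv : deriv (f ∘ L) = fun t => fderiv ℝ f (L t) v := funext fun t =>
    ((hf.differentiable (by norm_num) _).hasFDerivAt.comp_hasDerivAt t (hL t)).deriv
  have hderiv2 :
      deriv (fun t => fderiv ℝ f (L t) v) 0 = fderiv ℝ (fun y => fderiv ℝ f y v) p v := by
    rw [← hL0]
    exact ((hf.differentiable_fderiv_apply v) (L 0)).hasFDerivAt.comp_hasDerivAt 0 (hL 0)
      |>.deriv
  rw [← hderiv2, ← hderiv]
  exact (hL0 ▸ h).comp_continuous (hL 0).continuousAt |>.deriv_deriv_nonpos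
    (hf.continuous.continuousAt.comp (hL 0).continuousAt)

end SecondDerivative

section Laplacian

variable {N : ℕ} {f g : Euc N → ℝ}

theorem lap_nonpos_of_isLocalMax {p : Euc N} (hf : ContDiff ℝ 2 f) (h : IsLocalMax f p) :
    lap f p ≤ 0 :=
  Finset.sum_nonpos fun _ _ => h.fderiv_fderiv_apply_nonpos hf _

theorem lap_sub (hf : ContDiff ℝ 2 f) (hg : ContDiff ℝ 2 g) (x : Euc N) :
    lap (f - g) x = lap f x - lap g x := by
  rw [lap, lap, lap, ← Finset.sum_sub_distrib]
  refine Finset.sum_congr rfl fun i _ => ?_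
  set v : Euc N := EuclideanSpace.single i 1
  have hfg : (fun y => fderiv ℝ (f - g) y v) = fun y => fderiv ℝ f y v - fderiv ℝ g y v :=
    funext fun y => by
      rw [fderiv_sub (hf.differentiable (by norm_num) y) (hg.differentiable (by norm_num) y)]
      rfl
  rw [hfg, fderiv_fun_sub (hf.differentiable_fderiv_apply v x)
    (hg.differentiable_fderiv_apply v x)]
  rfl

theorem lap_neg (x : Euc N) : lap (-f) x = -lap f x := by
  simp only [lap, ← Finset.sum_neg_distrib, fderiv_neg, neg_apply, fderiv_fun_neg]

theorem lap_mul_norm_sub_sq (c : ℝ) (x₀ x : Euc N) :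
    lap (fun y => c * ‖y - x₀‖ ^ 2) x = 2 * N * c := by
  have hfirst (v y : Euc N) :
      fderiv ℝ (fun y => c * ‖y - x₀‖ ^ 2) y v = 2 * c * ⟪y - x₀, v⟫ := by
    have h : HasFDerivAt (fun y => c * ‖y - x₀‖ ^ 2) _ y :=
      ((hasFDerivAt_id y).sub_const x₀).norm_sq.const_mul c
    rw [h.fderiv]
    simp only [id_eq, map_sub, ContinuousLinearMap.comp_id, smul_apply, sub_apply,
      coe_innerSL_apply, nsmul_eq_mul, Nat.cast_ofNat, smul_eq_mul, inner_sub_left]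
    ring
  have hsecond (v : Euc N) :
      fderiv ℝ (fun y => 2 * c * ⟪y - x₀, v⟫) x v = 2 * c * ‖v‖ ^ 2 := by
    have h : HasFDerivAt (fun y => 2 * c * ⟪y - x₀, v⟫) _ x :=
      (((hasFDerivAt_id x).sub_const x₀).inner ℝ (hasFDerivAt_const v x)).const_mul (2 * c)
    rw [h.fderiv]
    simp
  simp only [lap, hfirst, hsecond, PiLp.norm_single, norm_one, one_pow, mul_one,
    Finset.sum_const, Finset.card_univ, Fintype.card_fin, nsmul_eq_mul]
  ring

end Laplacian

theorem sub_le_mul_one_add_norm_of_holder {E : Type*} [SeminormedAddCommGroup E] {f : E → ℝ}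
    {C α : ℝ} (hα₀ : 0 ≤ α) (hα₁ : α ≤ 1) (hf : ∀ x y, |f x - f y| ≤ C * ‖x - y‖ ^ α)
    (x y : E) : f x - f y ≤ |C| * (1 + ‖x - y‖) := by
  have hpow : ‖x - y‖ ^ α ≤ 1 + ‖x - y‖ := by
    rcases le_total ‖x - y‖ 1 with h | h
    · linarith [Real.rpow_le_one (norm_nonneg _) h hα₀, norm_nonneg (x - y)]
    · linarith [Real.rpow_le_self_of_one_le h hα₁]
  calc f x - f y ≤ C * ‖x - y‖ ^ α := (le_abs_self _).trans (hf x y)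
    _ ≤ |C| * ‖x - y‖ ^ α := by gcongr; exact le_abs_self C
    _ ≤ |C| * (1 + ‖x - y‖) := by gcongr

theorem tendsto_sub_mul_norm_sub_sq_cocompact_atBot {E : Type*} [NormedAddCommGroup E]
    [ProperSpace E] {f : E → ℝ} {B ε : ℝ} (hε : 0 < ε)
    (hf : ∀ x y, f x - f y ≤ B * (1 + ‖x - y‖)) (x₀ : E) :
    Tendsto (fun x => f x - ε * ‖x - x₀‖ ^ 2) (cocompact E) atBot := by
  have hdist : Tendsto (fun x => ‖x - x₀‖) (cocompact E) atTop :=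
    tendsto_norm_cocompact_atTop.comp
      (Homeomorph.subRight x₀).isClosedEmbedding.tendsto_cocompact
  have hlin : Tendsto (fun r : ℝ => B - ε * r) atTop atBot :=
    tendsto_atBot_add_const_left _ B
      (tendsto_neg_atTop_atBot.comp (tendsto_id.const_mul_atTop hε))
  have hquad : Tendsto (fun r : ℝ => f x₀ + (B + r * (B - ε * r))) atTop atBot :=
    tendsto_atBot_add_const_left _ _
      (tendsto_atBot_add_const_left _ B (tendsto_id.atTop_mul_atBot₀ hlin))
  refine tendsto_atBot_mono (fun x => ?_) (hquad.comp hdist)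
  have := hf x x₀
  simp only [Function.comp_apply]
  nlinarith

theorem nonpos_of_mul_le_lap {N : ℕ} {w : Euc N → ℝ} {l B : ℝ} (hl : 0 < l)
    (hw : ContDiff ℝ 2 w) (hsub : ∀ x, l * w x ≤ lap w x)
    (hgrowth : ∀ x y, w x - w y ≤ B * (1 + ‖x - y‖)) (x₀ : Euc N) : w x₀ ≤ 0 := by
  suffices h : ∀ ε > 0, l * w x₀ ≤ 2 * N * ε by
    have hlim : Tendsto (fun ε : ℝ => 2 * N * ε) (𝓝[>] 0) (𝓝 0) := by
      simpa using ((continuous_const_mul (2 * N : ℝ)).tendsto 0).mono_left nhdsWithin_le_nhds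
    have := ge_of_tendsto hlim (eventually_nhdsWithin_of_forall h)
    nlinarith
  intro ε hε
  set q : Euc N → ℝ := fun x => ε * ‖x - x₀‖ ^ 2
  have hq : ContDiff ℝ 2 q :=
    contDiff_const.mul ((contDiff_norm_sq ℝ).comp (contDiff_id.sub contDiff_const))
  obtain ⟨p, hp⟩ := (hw.sub hq).continuous.exists_forall_ge
    (tendsto_sub_mul_norm_sub_sq_cocompact_atBot hε hgrowth x₀)
  have hlap : lap (w - q) p ≤ 0 :=
    lap_nonpos_of_isLocalMax (hw.sub hq) (IsMaxOn.isLocalMax (fun x _ => hp x) univ_mem)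
  rw [lap_sub hw hq, lap_mul_norm_sub_sq] at hlap
  have hx₀p : w x₀ ≤ w p := by
    have := hp x₀
    simp only [q, sub_self, norm_zero] at this
    nlinarith [sq_nonneg ‖p - x₀‖]
  calc l * w x₀ ≤ l * w p := by gcongr
    _ ≤ lap w p := hsub p
    _ ≤ 2 * N * ε := by linarith

theorem stmt9_general (N : ℕ) (α : ℝ) (hα : α ∈ Set.Ioo (0 : ℝ) 1)
    (l : ℝ) (hl : 0 < l)
    (w : Euc N → ℝ) (hw : ContDiff ℝ 2 w) (heq : ∀ x, lap w x = l * w x)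
    (hHol : ∃ C : ℝ, ∀ x y, |w x - w y| ≤ C * ‖x - y‖ ^ α) :
    ∀ x, w x = 0 := by
  obtain ⟨C, hC⟩ := hHol
  have hgrowth := sub_le_mul_one_add_norm_of_holder hα.1.le hα.2.le hC
  intro x
  refine le_antisymm (nonpos_of_mul_le_lap hl hw (fun y => (heq y).ge) hgrowth x) ?_
  have hneg : -w x ≤ 0 := by
    refine nonpos_of_mul_le_lap (w := -w) (B := |C|) hl hw.neg
      (fun y => by simp [lap_neg, heq]) (fun y z => ?_) x
    rw [Pi.neg_apply, Pi.neg_apply, neg_sub_neg, norm_sub_rev]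
    exact hgrowth z y
  linarith

/-- A `C^2` function on `ℝ^N` with finite global `α`-Hölder seminorm solving
`Δw = λw` with `λ > 0` vanishes identically. -/
theorem stmt9 (N : ℕ) (hN : 1 ≤ N) (α : ℝ) (hα : α ∈ Set.Ioo (0 : ℝ) 1)
    (l : ℝ) (hl : 0 < l)
    (w : Euc N → ℝ) (hw : ContDiff ℝ 2 w) (heq : ∀ x, lap w x = l * w x)
    (hHol : ∃ C : ℝ, ∀ x y, |w x - w y| ≤ C * ‖x - y‖ ^ α) :
    ∀ x, w x = 0 :=
  stmt9_general N α hα l hl w hw heq hHol
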